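/- Let A be a closed subset of a Euclidean space that is (ε,δ)-regular at w ∈ A, and let U := {x : P_A(x) ⊆ B_δ(w)}. Then for every x ∈ U, every u ∈ R_A(x) = 2P_A(x) − x, and every x̄ ∈ A ∩ B_δ(w), one has ‖u − x̄‖ ≤ (1+2ε)‖x − x̄‖. -/

import Mathlib

open Metric Filter
open scoped Topology

variable {X : Type*} [NormedAddCommGroup X] [InnerProductSpace ℝ X] [FiniteDimensional ℝ X]

/-- Set-valued metric projection onto `C`. -/
def projSet (C : Set X) (x : X) : Set X := {a | a ∈ C ∧ ∀ c ∈ C, ‖x - a‖ ≤ ‖x - c‖}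

/-- Set-valued reflector `R_C = 2 P_C - Id`. -/
def reflSet (C : Set X) (x : X) : Set X := {z | ∃ a ∈ projSet C x, z = (2:ℝ) • a - x}

/-- Set-valued Douglas–Rachford operator `T(x) = {P_B(2a-x)+x-a : a ∈ P_A x}`. -/
def DRop (A B : Set X) (x : X) : Set X :=
  {y | ∃ a ∈ projSet A x, ∃ b ∈ projSet B ((2:ℝ) • a - x), y = b + x - a}

/-- Proximal normal cone `N^P_C(x) = cone (P_C⁻¹ x - x)`. -/
def proxNormalCone (C : Set X) (x : X) : Set X :=
  {u | ∃ t : ℝ, 0 ≤ t ∧ ∃ z : X, x ∈ projSet C z ∧ u = t • (z - x)}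

/-- Mordukhovich (limiting) normal cone. -/
def limNormalCone (C : Set X) (w : X) : Set X :=
  {u | ∃ xs us : ℕ → X, (∀ n, xs n ∈ C) ∧ (∀ n, us n ∈ proxNormalCone C (xs n)) ∧
      Tendsto xs atTop (𝓝 w) ∧ Tendsto us atTop (𝓝 u)}

/-- `(ε,δ)`-regularity of `C` at `w`. -/
def regAt (C : Set X) (w : X) (ε δ : ℝ) : Prop :=
  ∀ x ∈ C ∩ closedBall w δ, ∀ z ∈ C ∩ closedBall w δ, ∀ u ∈ proxNormalCone C x,
    (inner ℝ u (z - x) : ℝ) ≤ ε * ‖u‖ * ‖z - x‖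

/-- Superregularity of `C` at `w`. -/
def superregAt (C : Set X) (w : X) : Prop := ∀ ε > 0, ∃ δ > 0, regAt C w ε δ

/-- The quantity `θ̄(N₁,N₂) = sup {⟨u,v⟩ : u ∈ N₁ ∩ 𝔹, v ∈ (-N₂) ∩ 𝔹}`. -/
noncomputable def thetaBar (N₁ N₂ : Set X) : ℝ :=
  sSup {r : ℝ | ∃ u ∈ N₁, ∃ v ∈ -N₂, ‖u‖ ≤ 1 ∧ ‖v‖ ≤ 1 ∧ r = (inner ℝ u v : ℝ)}

/-!
Take `a ∈ P_A x`, so `u = 2a - x`. Then `‖u - x̄‖² = ‖x - x̄‖² + 4⟪x - a, x̄ - a⟫`, and regularity at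
`a` bounds the inner product by `ε ‖x - a‖ ‖x̄ - a‖`. Since `a` is a nearest point,
`‖x - a‖ ≤ ‖x - x̄‖`; combined with the law of cosines and regularity once more this gives
`‖x̄ - a‖ ≤ (1 + ε) ‖x - x̄‖`, so the excess `4⟪x - a, x̄ - a⟫` is at most
`4ε(1 + ε) ‖x - x̄‖²` and `‖u - x̄‖² ≤ (1 + 2ε)² ‖x - x̄‖²`.
-/

section Reflection

variable {E : Type*} [NormedAddCommGroup E] [InnerProductSpace ℝ E]

lemma norm_two_smul_sub_sub_sq (a x z : E) :
    ‖(2:ℝ) • a - x - z‖ ^ 2 = ‖x - z‖ ^ 2 + 4 * inner ℝ (x - a) (z - a) := by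
  have hsum : (2:ℝ) • a - x - z = -((x - a) + (z - a)) := by module
  have hdiff : x - z = (x - a) - (z - a) := by abel
  rw [hsum, norm_neg, hdiff, norm_add_sq_real (x - a), norm_sub_sq_real (x - a)]
  ring

lemma norm_sub_le_one_add_mul_of_inner_le {a x z : E} {ε : ℝ} (hε : 0 ≤ ε)
    (hnear : ‖x - a‖ ≤ ‖x - z‖) (hinner : inner ℝ (x - a) (z - a) ≤ ε * ‖x - a‖ * ‖z - a‖) :
    ‖z - a‖ ≤ (1 + ε) * ‖x - z‖ := by
  have hcos : ‖x - z‖ ^ 2 = ‖x - a‖ ^ 2 - 2 * inner ℝ (x - a) (z - a) + ‖z - a‖ ^ 2 := by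
    rw [← norm_sub_sq_real, sub_sub_sub_cancel_right]
  -- For `ε ≤ 1` complete the square in the law of cosines; for `ε > 1` the triangle inequality suffices.
  rcases le_or_gt ε 1 with hε1 | hε1
  · have hsq : (‖z - a‖ - ε * ‖x - a‖) ^ 2 ≤ ‖x - z‖ ^ 2 := by
      nlinarith [mul_nonneg (sub_nonneg.2 hε1) (add_nonneg zero_le_one hε), sq_nonneg ‖x - a‖]
    have hle := le_of_sq_le_sq hsq (norm_nonneg _)
    nlinarith
  · calc ‖z - a‖ ≤ ‖z - x‖ + ‖x - a‖ := norm_sub_le_norm_sub_add_norm_sub z x a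
      _ ≤ 2 * ‖x - z‖ := by rw [norm_sub_rev]; linarith
      _ ≤ (1 + ε) * ‖x - z‖ := by gcongr; linarith

lemma norm_two_smul_sub_sub_le_of_inner_le {a x z : E} {ε : ℝ} (hε : 0 ≤ ε)
    (hnear : ‖x - a‖ ≤ ‖x - z‖) (hinner : inner ℝ (x - a) (z - a) ≤ ε * ‖x - a‖ * ‖z - a‖) :
    ‖(2:ℝ) • a - x - z‖ ≤ (1 + 2 * ε) * ‖x - z‖ := by
  have hfar := norm_sub_le_one_add_mul_of_inner_le hε hnear hinner
  refine le_of_sq_le_sq ?_ (by positivity)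
  calc ‖(2:ℝ) • a - x - z‖ ^ 2 = ‖x - z‖ ^ 2 + 4 * inner ℝ (x - a) (z - a) :=
        norm_two_smul_sub_sub_sq a x z
    _ ≤ ‖x - z‖ ^ 2 + 4 * (ε * ‖x - z‖ * ((1 + ε) * ‖x - z‖)) := by
        gcongr
        calc inner ℝ (x - a) (z - a) ≤ ε * ‖x - a‖ * ‖z - a‖ := hinner
          _ ≤ ε * ‖x - z‖ * ((1 + ε) * ‖x - z‖) := by gcongr
    _ = ((1 + 2 * ε) * ‖x - z‖) ^ 2 := by ring

lemma sub_mem_proxNormalCone_of_mem_projSet {C : Set E} {a x : E} (ha : a ∈ projSet C x) :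
    x - a ∈ proxNormalCone C a :=
  ⟨1, zero_le_one, x, ha, (one_smul ℝ _).symm⟩

end Reflection

theorem reflector_quasi_nonexpansive_of_regular_general
    (A : Set X) (w : X)
    (ε δ : ℝ) (hε : 0 ≤ ε) (hreg : regAt A w ε δ)
    (x : X) (hx : projSet A x ⊆ closedBall w δ)
    (u : X) (hu : u ∈ reflSet A x)
    (xbar : X) (hxbar : xbar ∈ A ∩ closedBall w δ) :
    ‖u - xbar‖ ≤ (1 + 2 * ε) * ‖x - xbar‖ := by
  obtain ⟨a, haP, rfl⟩ := hu
  have hinner := hreg a ⟨haP.1, hx haP⟩ xbar hxbar (x - a)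
    (sub_mem_proxNormalCone_of_mem_projSet haP)
  exact norm_two_smul_sub_sub_le_of_inner_le hε (haP.2 xbar hxbar.1) hinner

theorem reflector_quasi_nonexpansive_of_regular
    (A : Set X) (hA : IsClosed A) (w : X) (hw : w ∈ A)
    (ε δ : ℝ) (hε : 0 ≤ ε) (hδ : 0 < δ) (hreg : regAt A w ε δ)
    (x : X) (hx : projSet A x ⊆ closedBall w δ)
    (u : X) (hu : u ∈ reflSet A x)
    (xbar : X) (hxbar : xbar ∈ A ∩ closedBall w δ) :
    ‖u - xbar‖ ≤ (1 + 2 * ε) * ‖x - xbar‖ :=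
  reflector_quasi_nonexpansive_of_regular_general A w ε δ hε hreg x hx u hu xbar hxbar
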